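/- arXiv:2508.18707 — 2 statements merged into one kernel-verified Lean document; each statement's English description precedes it below -/
import Mathlib

section
/- For each r ∈ {1,2,3,4,5}: if m ∈ ℕ⁺ and real coefficients a_{ij}, b_i, c_i satisfy the rth-order conditions of Table 1 (conditions (1)–(4) for r = 1; (1)–(5) for r = 2; (1)–(7) for r = 3; (1)–(11) for r = 4; (1)–(20) for r = 5), then the simplified order condition C(r) holds: A_i^m([ ]_0) = 0 for every i = 0, 1, …, m, and A_0^m(Υ) = 0 for every ULN-tree Υ ∈ T_{r−}. -/
/-!
Equivalent LN-trees have the same elementary coefficients, so `A_0` may be evaluated on any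
representative of a ULN-tree. An LN-tree of order at most `5` without a `[ ]_0` branch is one of
seventeen explicit trees. For a stage `j ≥ 1`, the row-sum condition (3) turns `A_j` of each of
their proper subtrees into a polynomial in `c_j` and the stage sums `∑_l a_{jl} ⋯`; with
`c_0 = 1`, `A_0` of the whole tree then expands into a linear combination of the sums of Table 1
up to its own order, and their prescribed values cancel. Conditions (3) and (4) give
`A_i([ ]_0) = 0`.
-/

/-- LN-trees: finite rooted trees whose nodes carry natural-number labels and whose
children are ordered. `LNTree.node k ys` is the tree `(Υ₁⋯Υ_l)_k` (for `ys = []` it is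
the single node `[ ]_k`). -/
inductive LNTree : Type where
  | node : ℕ → List LNTree → LNTree

/-- The sets `T̃^q` of LN-trees: `T̃⁰ = ∅`, `T̃¹` consists of the single nodes, and for
`q ≥ 2`, `T̃^q` consists of trees `(Υ₁⋯Υ_l)_k` with all `Υ_i ∈ ⋃_{j=1}^{q-1} T̃^j`. -/
def LNlevel : ℕ → Set LNTree
  | 0 => ∅
  | 1 => { t | ∃ k : ℕ, t = LNTree.node k [] }
  | q + 2 => { t | ∃ (k : ℕ) (ys : List LNTree), t = LNTree.node k ys ∧
      ∀ y ∈ ys, ∃ j : Fin (q + 2), 1 ≤ (j : ℕ) ∧ y ∈ LNlevel j }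
decreasing_by exact j.isLt

/-- Equivalence of LN-trees: `(Υ₁⋯Υ_l)_k ~ (Υ'₁⋯Υ'_{l'})_{k'}` iff `k = k'`, `l = l'` and
there is a permutation pairing the children, i.e. a bijection `σ` of the index sets with
`Υ_{σ i} ~ Υ'_i` for all `i` (for `l = l' = 0` this is `[ ]_k ~ [ ]_{k'}` iff `k = k'`). -/
inductive LNEquiv : LNTree → LNTree → Prop where
  | node (k : ℕ) (ys zs : List LNTree) (σ : Fin zs.length ≃ Fin ys.length)
      (h : ∀ i : Fin zs.length, LNEquiv (ys.get (σ i)) (zs.get i)) :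
      LNEquiv (LNTree.node k ys) (LNTree.node k zs)

/-- The root number of an LN-tree. -/
def LNTree.rootNum : LNTree → ℕ
  | .node k _ => k

/-- The order of an LN-tree: `|[ ]_k| = 1 + k`,
`|(Υ₁⋯Υ_l)_k| = 1 + k + ∑ᵢ |Υᵢ|`. -/
def LNTree.order : LNTree → ℕ
  | .node k ys => 1 + k + (ys.attach.map (fun y => LNTree.order y.1)).sum
decreasing_by simp only [LNTree.node.sizeOf_spec]; have := List.sizeOf_lt_of_mem y.2; omega

/-- `N_P(Υ₁,…,Υ_l)`: the number of permutations `σ` of the indices with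
`Υ_{σ i} = Υ_i` for all `i`. -/
noncomputable def NP (ys : List LNTree) : ℕ :=
  Nat.card { σ : Equiv.Perm (Fin ys.length) // ∀ i, ys.get (σ i) = ys.get i }

/-- The symmetry order of an LN-tree: `S([ ]_k) = 1`,
`S((Υ₁⋯Υ_l)_k) = N_P ⬝ ∏ᵢ S(Υᵢ)`. -/
noncomputable def LNTree.symOrder : LNTree → ℕ
  | .node _ ys => NP ys * (ys.attach.map (fun y => LNTree.symOrder y.1)).prod
decreasing_by simp only [LNTree.node.sizeOf_spec]; have := List.sizeOf_lt_of_mem y.2; omega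

/-- The factorial of an LN-tree: `γ([ ]_k) = k!`,
`γ((Υ₁⋯Υ_l)_k) = k! ⬝ l! ⬝ ∏ᵢ γ(Υᵢ)`. -/
def LNTree.factGamma : LNTree → ℕ
  | .node k ys =>
      Nat.factorial k * Nat.factorial ys.length *
        (ys.attach.map (fun y => LNTree.factGamma y.1)).prod
decreasing_by simp only [LNTree.node.sizeOf_spec]; have := List.sizeOf_lt_of_mem y.2; omega

open Finset in
/-- The elementary coefficients `A_j^m(Υ)` of an LN-tree, given Runge–Kutta
coefficients `a_{ij}` (1 ≤ i,j ≤ m), `b_j` (1 ≤ j ≤ m) and `c_i` (0 ≤ i ≤ m):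
for the single node `[ ]_k`,
`A_i^m = ∑_j a_{ij}(c_i−c_j)^k − c_i^{k+1}/(k+1)` and
`A_0^m = ∑_j b_j(c_0−c_j)^k − 1/(k+1)`; for `(Υ₁⋯Υ_l)_k` with `l ≥ 1`,
`A_i^m = ∑_j a_{ij}(c_i−c_j)^k ∏_p A_j^m(Υ_p)` and
`A_0^m = ∑_j b_j(c_0−c_j)^k ∏_p A_j^m(Υ_p)`. -/
noncomputable def elemCoeff (m : ℕ) (a : ℕ → ℕ → ℝ) (b c : ℕ → ℝ) : ℕ → LNTree → ℝ
  | i, .node k [] =>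
      if i = 0 then
        (∑ j ∈ Icc 1 m, b j * (c 0 - c j) ^ k) - 1 / ((k : ℝ) + 1)
      else
        (∑ j ∈ Icc 1 m, a i j * (c i - c j) ^ k) - (c i) ^ (k + 1) / ((k : ℝ) + 1)
  | i, .node k (y₀ :: ys) =>
      if i = 0 then
        ∑ j ∈ Icc 1 m, b j * (c 0 - c j) ^ k *
          (((y₀ :: ys).attach).map (fun y => elemCoeff m a b c j y.1)).prod
      else
        ∑ j ∈ Icc 1 m, a i j * (c i - c j) ^ k *
          (((y₀ :: ys).attach).map (fun y => elemCoeff m a b c j y.1)).prod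
termination_by i t => sizeOf t
decreasing_by
  all_goals simp only [LNTree.node.sizeOf_spec]; have := List.sizeOf_lt_of_mem y.2; omega

/-- The ULN-tree (equivalence class) `⟦Υ⟧ = {Υ' : Υ' ~ Υ}` of an LN-tree. -/
def eqClass (t : LNTree) : Set LNTree := { t' | LNEquiv t' t }

/-- A set of LN-trees is a ULN-tree iff it is an equivalence class of `~`. -/
def IsULN (S : Set LNTree) : Prop := ∃ t : LNTree, S = eqClass t

/-- The set `(⟦Υ₁⟧⋯⟦Υ_l⟧)_k := { Υ : Υ ~ (Υ'₁⋯Υ'_l)_k for some Υ'_i ∈ ⟦Υ_i⟧ }`,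
for representatives `ts = [Υ₁,…,Υ_l]`. -/
def classJoin (k : ℕ) (ts : List LNTree) : Set LNTree :=
  { t | ∃ (ys : List LNTree) (h : ys.length = ts.length),
      (∀ i : Fin ys.length, ys.get i ∈ eqClass (ts.get (Fin.cast h i))) ∧
      LNEquiv t (LNTree.node k ys) }

/-- The branch relation on LN-trees: `[ ]_k` has no branches, and `Υ'` is a branch of
`(Υ₁⋯Υ_l)_k` iff `Υ' = Υ_i` for some `i` or `Υ'` is a branch of some `Υ_i`. -/
inductive IsBranch : LNTree → LNTree → Prop where
  | mem {t : LNTree} {k : ℕ} {ys : List LNTree} :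
      t ∈ ys → IsBranch t (LNTree.node k ys)
  | trans {t y : LNTree} {k : ℕ} {ys : List LNTree} :
      y ∈ ys → IsBranch t y → IsBranch t (LNTree.node k ys)

/-- The branch relation descended to ULN-trees (equivalence classes). -/
def ULNBranch (S' S : Set LNTree) : Prop :=
  ∃ t' t : LNTree, S' = eqClass t' ∧ S = eqClass t ∧ IsBranch t' t

open Finset in
/-- The conditions of Table 1, numbered `1`–`20`, for Runge–Kutta coefficients
`a_{ij}` (1 ≤ i,j ≤ m), `b_i` (1 ≤ i ≤ m) and `c_i` (0 ≤ i ≤ m). -/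
def tableCond (m : ℕ) (a : ℕ → ℕ → ℝ) (b c : ℕ → ℝ) : ℕ → Prop
  | 1 => c m = 0 ∧ c 0 = 1 ∧ ∀ i, 1 ≤ i → i ≤ m → c i < c (i - 1)
  | 2 => ∀ i j, 1 ≤ j → j ≤ i → i ≤ m → a i j = 0
  | 3 => ∀ i, 1 ≤ i → i ≤ m → c i = ∑ j ∈ Icc 1 m, a i j
  | 4 => ∑ i ∈ Icc 1 m, b i = 1
  | 5 => ∑ i ∈ Icc 1 m, b i * c i = 1 / 2
  | 6 => ∑ i ∈ Icc 1 m, b i * c i ^ 2 = 1 / 3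
  | 7 => ∑ i ∈ Icc 1 m, ∑ j ∈ Icc 1 m, b i * a i j * c j = 1 / 6
  | 8 => ∑ i ∈ Icc 1 m, b i * c i ^ 3 = 1 / 4
  | 9 => ∑ i ∈ Icc 1 m, ∑ j ∈ Icc 1 m, b i * c i * a i j * c j = 1 / 8
  | 10 => ∑ i ∈ Icc 1 m, ∑ j ∈ Icc 1 m, b i * a i j * c j ^ 2 = 1 / 12
  | 11 => ∑ i ∈ Icc 1 m, ∑ j ∈ Icc 1 m, ∑ k ∈ Icc 1 m,
      b i * a i j * a j k * c k = 1 / 24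
  | 12 => ∑ i ∈ Icc 1 m, b i * c i ^ 4 = 1 / 5
  | 13 => ∑ i ∈ Icc 1 m, ∑ j ∈ Icc 1 m, b i * c i ^ 2 * a i j * c j = 1 / 10
  | 14 => ∑ i ∈ Icc 1 m, ∑ j ∈ Icc 1 m, b i * c i * a i j * c j ^ 2 = 1 / 15
  | 15 => ∑ i ∈ Icc 1 m, ∑ j ∈ Icc 1 m, ∑ k ∈ Icc 1 m,
      b i * c i * a i j * a j k * c k = 1 / 30
  | 16 => ∑ i ∈ Icc 1 m, b i * (∑ j ∈ Icc 1 m, a i j * c j) ^ 2 = 1 / 20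
  | 17 => ∑ i ∈ Icc 1 m, ∑ j ∈ Icc 1 m, b i * a i j * c j ^ 3 = 1 / 20
  | 18 => ∑ i ∈ Icc 1 m, ∑ j ∈ Icc 1 m, ∑ k ∈ Icc 1 m,
      b i * a i j * c j * a j k * c k = 1 / 40
  | 19 => ∑ i ∈ Icc 1 m, ∑ j ∈ Icc 1 m, ∑ k ∈ Icc 1 m,
      b i * a i j * a j k * c k ^ 2 = 1 / 60
  | 20 => ∑ i ∈ Icc 1 m, ∑ j ∈ Icc 1 m, ∑ k ∈ Icc 1 m, ∑ l ∈ Icc 1 m,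
      b i * a i j * a j k * a k l * c l = 1 / 120
  | _ => True

/-- `T_r`: the set of ULN-trees (equivalence classes) of order at most `r`. -/
def ULNTr (r : ℕ) : Set (Set LNTree) :=
  { S | ∃ t : LNTree, t.order ≤ r ∧ S = eqClass t }

/-- `T_{r−} := { Υ ∈ T_r : ⟦[ ]_0⟧ is not a branch of Υ }`. -/
def ULNTrMinus (r : ℕ) : Set (Set LNTree) :=
  { S | S ∈ ULNTr r ∧ ¬ ULNBranch (eqClass (LNTree.node 0 [])) S }

/-- The number of the last Table 1 condition required for order `r`:
conditions (1)–(4) for `r = 1`, (1)–(5) for `r = 2`, (1)–(7) for `r = 3`,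
(1)–(11) for `r = 4`, (1)–(20) for `r = 5`. -/
def numCond : ℕ → ℕ
  | 1 => 4
  | 2 => 5
  | 3 => 7
  | 4 => 11
  | 5 => 20
  | _ => 0

open Finset

namespace LNTree

abbrev leaf (k : ℕ) : LNTree := node k []

theorem order_node (k : ℕ) (ys : List LNTree) :
    (node k ys).order = 1 + k + (ys.map order).sum := by
  rw [order, List.map_attach_eq_pmap, List.pmap_eq_map]

theorem one_le_order (t : LNTree) : 1 ≤ t.order := by
  cases t; rw [order_node]; omega

theorem two_le_order {t : LNTree} (ht : t ≠ leaf 0) : 2 ≤ t.order := by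
  obtain ⟨k, _ | ⟨y, ys⟩⟩ := t
  · have : k ≠ 0 := by rintro rfl; exact ht rfl
    simp [order_node]; omega
  · have := one_le_order y
    simp only [order_node, List.map_cons, List.sum_cons]; omega

end LNTree

open LNTree

section ElemCoeff

variable {m : ℕ} {a : ℕ → ℕ → ℝ} {b c : ℕ → ℝ}

theorem elemCoeff_zero_leaf (k : ℕ) :
    elemCoeff m a b c 0 (leaf k) =
      ∑ j ∈ Icc 1 m, b j * (c 0 - c j) ^ k - 1 / ((k : ℝ) + 1) := by
  rw [elemCoeff]; rfl

theorem elemCoeff_leaf {i : ℕ} (hi : i ≠ 0) (k : ℕ) :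
    elemCoeff m a b c i (leaf k) =
      ∑ j ∈ Icc 1 m, a i j * (c i - c j) ^ k - c i ^ (k + 1) / ((k : ℝ) + 1) := by
  rw [elemCoeff, if_neg hi]

theorem elemCoeff_zero_node_cons (k : ℕ) (y : LNTree) (ys : List LNTree) :
    elemCoeff m a b c 0 (node k (y :: ys)) =
      ∑ j ∈ Icc 1 m, b j * (c 0 - c j) ^ k * ((y :: ys).map (elemCoeff m a b c j)).prod := by
  rw [elemCoeff, if_pos rfl]; simp only [List.map_attach_eq_pmap, List.pmap_eq_map]

theorem elemCoeff_node_cons {i : ℕ} (hi : i ≠ 0) (k : ℕ) (y : LNTree) (ys : List LNTree) :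
    elemCoeff m a b c i (node k (y :: ys)) =
      ∑ j ∈ Icc 1 m, a i j * (c i - c j) ^ k * ((y :: ys).map (elemCoeff m a b c j)).prod := by
  rw [elemCoeff, if_neg hi]; simp only [List.map_attach_eq_pmap, List.pmap_eq_map]

theorem elemCoeff_zero_node_singleton (k : ℕ) (y : LNTree) :
    elemCoeff m a b c 0 (node k [y]) =
      ∑ j ∈ Icc 1 m, b j * (c 0 - c j) ^ k * elemCoeff m a b c j y := by
  simp [elemCoeff_zero_node_cons]

theorem elemCoeff_node_singleton {i : ℕ} (hi : i ≠ 0) (k : ℕ) (y : LNTree) :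
    elemCoeff m a b c i (node k [y]) =
      ∑ j ∈ Icc 1 m, a i j * (c i - c j) ^ k * elemCoeff m a b c j y := by
  simp [elemCoeff_node_cons hi]

theorem LNEquiv.elemCoeff_eq {s t : LNTree} (h : LNEquiv s t) (i : ℕ) :
    elemCoeff m a b c i s = elemCoeff m a b c i t := by
  induction h generalizing i with
  | node k ys zs σ _ ih =>
    have hprod (j : ℕ) :
        (ys.map (elemCoeff m a b c j)).prod = (zs.map (elemCoeff m a b c j)).prod := by
      rw [← Fin.prod_univ_fun_getElem, ← Fin.prod_univ_fun_getElem, ← σ.prod_comp]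
      exact prod_congr rfl fun p _ => ih p j
    have hlen : zs.length = ys.length := by simpa using Fintype.card_congr σ
    match ys, zs, hlen, hprod with
    | [], [], _, _ => rfl
    | _ :: _, _ :: _, _, hprod =>
      rcases Nat.eq_zero_or_pos i with rfl | hi
      · simp only [elemCoeff_zero_node_cons, hprod]
      · simp only [elemCoeff_node_cons hi.ne', hprod]

end ElemCoeff

section StageCoefficients

variable {m : ℕ} {a : ℕ → ℕ → ℝ} {b c : ℕ → ℝ}

theorem elemCoeff_leaf_of_mem (hrow : tableCond m a b c 3) {j : ℕ} (hj : j ∈ Icc 1 m)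
    (k : ℕ) :
    elemCoeff m a b c j (leaf k) =
      ∑ l ∈ Icc 1 m, a j l * ((c j - c l) ^ k - c j ^ k) + k / (k + 1) * c j ^ (k + 1) := by
  obtain ⟨hj1, hjm⟩ := mem_Icc.mp hj
  rw [elemCoeff_leaf (by omega)]
  simp only [mul_sub, sum_sub_distrib, ← sum_mul, ← hrow j hj1 hjm]
  field_simp
  ring

theorem elemCoeff_leaf1_of_mem (hrow : tableCond m a b c 3) {j : ℕ} (hj : j ∈ Icc 1 m) :
    elemCoeff m a b c j (leaf 1) = c j ^ 2 / 2 - ∑ l ∈ Icc 1 m, a j l * c l := by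
  rw [elemCoeff_leaf_of_mem hrow hj]
  simp only [pow_one, sub_sub_cancel_left, mul_neg, sum_neg_distrib]
  ring

theorem elemCoeff_leaf2_of_mem (hrow : tableCond m a b c 3) {j : ℕ} (hj : j ∈ Icc 1 m) :
    elemCoeff m a b c j (leaf 2) =
      2 / 3 * c j ^ 3 - 2 * c j * ∑ l ∈ Icc 1 m, a j l * c l
        + ∑ l ∈ Icc 1 m, a j l * c l ^ 2 := by
  have h : ∑ l ∈ Icc 1 m, a j l * ((c j - c l) ^ 2 - c j ^ 2) =
      ∑ l ∈ Icc 1 m, (a j l * c l ^ 2 - 2 * c j * (a j l * c l)) :=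
    sum_congr rfl fun _ _ => by ring
  rw [elemCoeff_leaf_of_mem hrow hj, h, sum_sub_distrib, ← mul_sum]
  push_cast
  ring

theorem elemCoeff_leaf3_of_mem (hrow : tableCond m a b c 3) {j : ℕ} (hj : j ∈ Icc 1 m) :
    elemCoeff m a b c j (leaf 3) =
      3 / 4 * c j ^ 4 - 3 * c j ^ 2 * ∑ l ∈ Icc 1 m, a j l * c l
        + 3 * c j * ∑ l ∈ Icc 1 m, a j l * c l ^ 2 - ∑ l ∈ Icc 1 m, a j l * c l ^ 3 := by
  have h : ∑ l ∈ Icc 1 m, a j l * ((c j - c l) ^ 3 - c j ^ 3) =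
      ∑ l ∈ Icc 1 m,
        (3 * c j * (a j l * c l ^ 2) - 3 * c j ^ 2 * (a j l * c l) - a j l * c l ^ 3) :=
    sum_congr rfl fun _ _ => by ring
  rw [elemCoeff_leaf_of_mem hrow hj, h, sum_sub_distrib, sum_sub_distrib, ← mul_sum, ← mul_sum]
  push_cast
  ring

theorem elemCoeff_node0_leaf1_of_mem (hrow : tableCond m a b c 3) {j : ℕ} (hj : j ∈ Icc 1 m) :
    elemCoeff m a b c j (node 0 [leaf 1]) =
      (∑ l ∈ Icc 1 m, a j l * c l ^ 2) / 2
        - ∑ l ∈ Icc 1 m, a j l * ∑ p ∈ Icc 1 m, a l p * c p := by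
  rw [elemCoeff_node_singleton (by grind) 0]
  -- `simp` enters the sum through `Finset.sum_congr`, which hands `l ∈ Icc 1 m` to the discharger.
  simp (disch := assumption) only [pow_zero, mul_one, elemCoeff_leaf1_of_mem hrow, mul_sub,
    sum_sub_distrib, sum_div, mul_div_assoc]

theorem elemCoeff_node0_leaf2_of_mem (hrow : tableCond m a b c 3) {j : ℕ} (hj : j ∈ Icc 1 m) :
    elemCoeff m a b c j (node 0 [leaf 2]) =
      2 / 3 * ∑ l ∈ Icc 1 m, a j l * c l ^ 3
        - 2 * ∑ l ∈ Icc 1 m, a j l * (c l * ∑ p ∈ Icc 1 m, a l p * c p)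
        + ∑ l ∈ Icc 1 m, a j l * ∑ p ∈ Icc 1 m, a l p * c p ^ 2 := by
  rw [elemCoeff_node_singleton (by grind) 0]
  simp (disch := assumption) only [pow_zero, mul_one, elemCoeff_leaf2_of_mem hrow, mul_sub,
    mul_add, sum_sub_distrib, sum_add_distrib, mul_sum]
  ring_nf

theorem elemCoeff_node1_leaf1_of_mem (hrow : tableCond m a b c 3) {j : ℕ} (hj : j ∈ Icc 1 m) :
    elemCoeff m a b c j (node 1 [leaf 1]) =
      c j * (∑ l ∈ Icc 1 m, a j l * c l ^ 2) / 2
        - c j * ∑ l ∈ Icc 1 m, a j l * ∑ p ∈ Icc 1 m, a l p * c p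
        - (∑ l ∈ Icc 1 m, a j l * c l ^ 3) / 2
        + ∑ l ∈ Icc 1 m, a j l * (c l * ∑ p ∈ Icc 1 m, a l p * c p) := by
  have h : ∀ l ∈ Icc 1 m, a j l * (c j - c l) ^ 1 * elemCoeff m a b c l (leaf 1) =
      c j * (a j l * c l ^ 2) / 2 - c j * (a j l * ∑ p ∈ Icc 1 m, a l p * c p)
        - a j l * c l ^ 3 / 2 + a j l * (c l * ∑ p ∈ Icc 1 m, a l p * c p) := by
    intro l hl
    rw [elemCoeff_leaf1_of_mem hrow hl]
    ring
  rw [elemCoeff_node_singleton (by grind) 1, sum_congr rfl h]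
  simp only [sum_add_distrib, sum_sub_distrib, ← sum_div, ← mul_sum]

theorem elemCoeff_node0_node0_leaf1_of_mem (hrow : tableCond m a b c 3) {j : ℕ}
    (hj : j ∈ Icc 1 m) :
    elemCoeff m a b c j (node 0 [node 0 [leaf 1]]) =
      (∑ l ∈ Icc 1 m, a j l * ∑ p ∈ Icc 1 m, a l p * c p ^ 2) / 2
        - ∑ l ∈ Icc 1 m, a j l * ∑ p ∈ Icc 1 m, a l p * ∑ q ∈ Icc 1 m, a p q * c q := by
  rw [elemCoeff_node_singleton (by grind) 0]
  simp (disch := assumption) only [pow_zero, mul_one, elemCoeff_node0_leaf1_of_mem hrow, mul_sub,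
    sum_sub_distrib, mul_sum, sum_div]
  ring_nf

end StageCoefficients

namespace LNTree

theorem not_isBranch_of_mem {y : LNTree} {k : ℕ} {ys : List LNTree} (hy : y ∈ ys)
    (hb : ¬ IsBranch (leaf 0) (node k ys)) : y ≠ leaf 0 ∧ ¬ IsBranch (leaf 0) y :=
  ⟨by rintro rfl; exact hb (.mem hy), fun h => hb (.trans hy h)⟩

theorem eq_leaf1_of_order_le_two {t : LNTree} (h0 : t ≠ leaf 0) (hb : ¬ IsBranch (leaf 0) t)
    (ho : t.order ≤ 2) : t = leaf 1 := by
  obtain ⟨k, _ | ⟨y, ys⟩⟩ := t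
  · simp only [order_node, List.map_nil, List.sum_nil] at ho
    obtain rfl | rfl : k = 0 ∨ k = 1 := by omega
    exacts [absurd rfl h0, rfl]
  · have := two_le_order (not_isBranch_of_mem List.mem_cons_self hb).1
    simp only [order_node, List.map_cons, List.sum_cons] at ho; omega

theorem eq_of_order_le_three {t : LNTree} (h0 : t ≠ leaf 0) (hb : ¬ IsBranch (leaf 0) t)
    (ho : t.order ≤ 3) : t = leaf 1 ∨ t = leaf 2 ∨ t = node 0 [leaf 1] := by
  obtain ⟨k, _ | ⟨y, _ | ⟨z, zs⟩⟩⟩ := t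
  · simp only [order_node, List.map_nil, List.sum_nil] at ho
    obtain rfl | rfl | rfl : k = 0 ∨ k = 1 ∨ k = 2 := by omega
    exacts [absurd rfl h0, .inl rfl, .inr (.inl rfl)]
  · obtain ⟨hy0, hyb⟩ := not_isBranch_of_mem List.mem_cons_self hb
    have := two_le_order hy0
    simp only [order_node, List.map_cons, List.map_nil, List.sum_cons, List.sum_nil] at ho
    obtain rfl : k = 0 := by omega
    rw [eq_leaf1_of_order_le_two hy0 hyb (by omega)]
    exact .inr (.inr rfl)
  · have := two_le_order (not_isBranch_of_mem List.mem_cons_self hb).1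
    have := two_le_order (not_isBranch_of_mem (by simp : z ∈ y :: z :: zs) hb).1
    simp only [order_node, List.map_cons, List.sum_cons] at ho; omega

theorem eq_of_order_le_four {t : LNTree} (h0 : t ≠ leaf 0) (hb : ¬ IsBranch (leaf 0) t)
    (ho : t.order ≤ 4) :
    t = leaf 1 ∨ t = leaf 2 ∨ t = leaf 3 ∨ t = node 0 [leaf 1] ∨ t = node 0 [leaf 2] ∨
      t = node 1 [leaf 1] ∨ t = node 0 [node 0 [leaf 1]] := by
  obtain ⟨k, _ | ⟨y, _ | ⟨z, zs⟩⟩⟩ := t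
  · simp only [order_node, List.map_nil, List.sum_nil] at ho
    obtain rfl | rfl | rfl | rfl : k = 0 ∨ k = 1 ∨ k = 2 ∨ k = 3 := by omega
    exacts [absurd rfl h0, .inl rfl, .inr (.inl rfl), .inr (.inr (.inl rfl))]
  · obtain ⟨hy0, hyb⟩ := not_isBranch_of_mem List.mem_cons_self hb
    have := two_le_order hy0
    simp only [order_node, List.map_cons, List.map_nil, List.sum_cons, List.sum_nil] at ho
    obtain rfl | rfl : k = 0 ∨ k = 1 := by omega
    · rcases eq_of_order_le_three hy0 hyb (by omega) with rfl | rfl | rfl <;> simp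
    · rw [eq_leaf1_of_order_le_two hy0 hyb (by omega)]; simp
  · have := two_le_order (not_isBranch_of_mem List.mem_cons_self hb).1
    have := two_le_order (not_isBranch_of_mem (by simp : z ∈ y :: z :: zs) hb).1
    simp only [order_node, List.map_cons, List.sum_cons] at ho; omega

theorem eq_of_order_le_five {t : LNTree} (hb : ¬ IsBranch (leaf 0) t) (ho : t.order ≤ 5) :
    t = leaf 0 ∨ t = leaf 1 ∨ t = leaf 2 ∨ t = leaf 3 ∨ t = leaf 4 ∨
      t = node 0 [leaf 1] ∨ t = node 0 [leaf 2] ∨ t = node 1 [leaf 1] ∨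
      t = node 0 [node 0 [leaf 1]] ∨ t = node 0 [leaf 3] ∨ t = node 0 [node 0 [leaf 2]] ∨
      t = node 0 [node 1 [leaf 1]] ∨ t = node 0 [node 0 [node 0 [leaf 1]]] ∨
      t = node 1 [leaf 2] ∨ t = node 1 [node 0 [leaf 1]] ∨ t = node 2 [leaf 1] ∨
      t = node 0 [leaf 1, leaf 1] := by
  obtain ⟨k, _ | ⟨y, _ | ⟨z, _ | ⟨w, ws⟩⟩⟩⟩ := t
  · simp only [order_node, List.map_nil, List.sum_nil] at ho
    obtain rfl | rfl | rfl | rfl | rfl : k = 0 ∨ k = 1 ∨ k = 2 ∨ k = 3 ∨ k = 4 := by omega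
    all_goals simp
  · obtain ⟨hy0, hyb⟩ := not_isBranch_of_mem List.mem_cons_self hb
    have := two_le_order hy0
    simp only [order_node, List.map_cons, List.map_nil, List.sum_cons, List.sum_nil] at ho
    obtain rfl | rfl | rfl : k = 0 ∨ k = 1 ∨ k = 2 := by omega
    · rcases eq_of_order_le_four hy0 hyb (by omega) with
        rfl | rfl | rfl | rfl | rfl | rfl | rfl <;> simp
    · rcases eq_of_order_le_three hy0 hyb (by omega) with rfl | rfl | rfl <;> simp
    · rw [eq_leaf1_of_order_le_two hy0 hyb (by omega)]; simp
  · obtain ⟨hy0, hyb⟩ := not_isBranch_of_mem List.mem_cons_self hb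
    obtain ⟨hz0, hzb⟩ := not_isBranch_of_mem (by simp : z ∈ [y, z]) hb
    have := two_le_order hy0
    have := two_le_order hz0
    simp only [order_node, List.map_cons, List.map_nil, List.sum_cons, List.sum_nil] at ho
    obtain rfl : k = 0 := by omega
    rw [eq_leaf1_of_order_le_two hy0 hyb (by omega), eq_leaf1_of_order_le_two hz0 hzb (by omega)]
    simp
  · have := two_le_order (not_isBranch_of_mem List.mem_cons_self hb).1
    have := two_le_order (not_isBranch_of_mem (by simp : z ∈ y :: z :: w :: ws) hb).1
    have := two_le_order (not_isBranch_of_mem (by simp : w ∈ y :: z :: w :: ws) hb).1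
    simp only [order_node, List.map_cons, List.sum_cons] at ho; omega

end LNTree

section RootCoefficients

variable {m : ℕ} {a : ℕ → ℕ → ℝ} {b c : ℕ → ℝ}

theorem elemCoeff_leaf0_eq_zero (h3 : tableCond m a b c 3) (h4 : tableCond m a b c 4) :
    ∀ i ≤ m, elemCoeff m a b c i (leaf 0) = 0 := by
  intro i hi
  rcases Nat.eq_zero_or_pos i with rfl | hi0
  · simp [elemCoeff_zero_leaf, show ∑ j ∈ Icc 1 m, b j = 1 from h4]
  · simp [elemCoeff_leaf hi0.ne', ← h3 i hi0 hi]

theorem elemCoeff_zero_leaf1_eq_zero (h1 : tableCond m a b c 1) (h4 : tableCond m a b c 4)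
    (h5 : tableCond m a b c 5) : elemCoeff m a b c 0 (leaf 1) = 0 := by
  rw [elemCoeff_zero_leaf, h1.2.1]
  simp only [tableCond] at *
  ring_nf at *
  simp only [sum_sub_distrib] at *
  linarith

theorem elemCoeff_zero_leaf2_eq_zero (h1 : tableCond m a b c 1) (h4 : tableCond m a b c 4)
    (h5 : tableCond m a b c 5) (h6 : tableCond m a b c 6) : elemCoeff m a b c 0 (leaf 2) = 0 := by
  rw [elemCoeff_zero_leaf, h1.2.1]
  simp only [tableCond] at *
  ring_nf at *
  simp only [sum_add_distrib, sum_sub_distrib, ← sum_mul] at *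
  linarith

theorem elemCoeff_zero_leaf3_eq_zero (h1 : tableCond m a b c 1) (h4 : tableCond m a b c 4)
    (h5 : tableCond m a b c 5) (h6 : tableCond m a b c 6) (h8 : tableCond m a b c 8) :
    elemCoeff m a b c 0 (leaf 3) = 0 := by
  rw [elemCoeff_zero_leaf, h1.2.1]
  simp only [tableCond] at *
  ring_nf at *
  simp only [sum_add_distrib, sum_sub_distrib, ← sum_mul] at *
  linarith

theorem elemCoeff_zero_leaf4_eq_zero (h1 : tableCond m a b c 1) (h4 : tableCond m a b c 4)
    (h5 : tableCond m a b c 5) (h6 : tableCond m a b c 6) (h8 : tableCond m a b c 8)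
    (h12 : tableCond m a b c 12) : elemCoeff m a b c 0 (leaf 4) = 0 := by
  rw [elemCoeff_zero_leaf, h1.2.1]
  simp only [tableCond] at *
  ring_nf at *
  simp only [sum_add_distrib, sum_sub_distrib, ← sum_mul] at *
  linarith

-- Pulling the outer-stage factors out of the inner sums (`mul_assoc`, `← mul_sum`) writes each
-- condition of Table 1 in the stage sums that occur in the expanded `A_0`, so that `linarith`
-- finds `A_0` as a linear combination of the conditions.
theorem elemCoeff_zero_node0_leaf1_eq_zero (h3 : tableCond m a b c 3) (h6 : tableCond m a b c 6)
    (h7 : tableCond m a b c 7) : elemCoeff m a b c 0 (node 0 [leaf 1]) = 0 := by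
  rw [elemCoeff_zero_node_singleton]
  simp (disch := assumption) only [elemCoeff_leaf1_of_mem h3]
  simp only [tableCond, mul_assoc, ← mul_sum] at *
  ring_nf at *
  simp only [sum_sub_distrib, ← sum_mul] at *
  linarith

theorem elemCoeff_zero_node0_leaf2_eq_zero (h3 : tableCond m a b c 3) (h8 : tableCond m a b c 8)
    (h9 : tableCond m a b c 9) (h10 : tableCond m a b c 10) :
    elemCoeff m a b c 0 (node 0 [leaf 2]) = 0 := by
  rw [elemCoeff_zero_node_singleton]
  simp (disch := assumption) only [elemCoeff_leaf2_of_mem h3]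
  simp only [tableCond, mul_assoc, ← mul_sum] at *
  ring_nf at *
  simp only [sum_add_distrib, sum_neg_distrib, ← sum_mul] at *
  linarith

theorem elemCoeff_zero_node1_leaf1_eq_zero (h1 : tableCond m a b c 1) (h3 : tableCond m a b c 3)
    (h6 : tableCond m a b c 6) (h7 : tableCond m a b c 7) (h8 : tableCond m a b c 8)
    (h9 : tableCond m a b c 9) : elemCoeff m a b c 0 (node 1 [leaf 1]) = 0 := by
  rw [elemCoeff_zero_node_singleton, h1.2.1]
  simp (disch := assumption) only [elemCoeff_leaf1_of_mem h3]
  simp only [tableCond, mul_assoc, ← mul_sum] at *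
  ring_nf at *
  simp only [sum_add_distrib, sum_sub_distrib, ← sum_mul] at *
  linarith

theorem elemCoeff_zero_node0_node0_leaf1_eq_zero (h3 : tableCond m a b c 3)
    (h10 : tableCond m a b c 10) (h11 : tableCond m a b c 11) :
    elemCoeff m a b c 0 (node 0 [node 0 [leaf 1]]) = 0 := by
  rw [elemCoeff_zero_node_singleton]
  simp (disch := assumption) only [elemCoeff_node0_leaf1_of_mem h3]
  simp only [tableCond, mul_assoc, ← mul_sum] at *
  ring_nf at *
  simp only [sum_sub_distrib, ← sum_mul] at *
  linarith

theorem elemCoeff_zero_node0_leaf3_eq_zero (h3 : tableCond m a b c 3) (h12 : tableCond m a b c 12)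
    (h13 : tableCond m a b c 13) (h14 : tableCond m a b c 14) (h17 : tableCond m a b c 17) :
    elemCoeff m a b c 0 (node 0 [leaf 3]) = 0 := by
  rw [elemCoeff_zero_node_singleton]
  simp (disch := assumption) only [elemCoeff_leaf3_of_mem h3]
  simp only [tableCond, mul_assoc, ← mul_sum] at *
  ring_nf at *
  simp only [sum_add_distrib, sum_sub_distrib, ← sum_mul] at *
  linarith

theorem elemCoeff_zero_node0_node0_leaf2_eq_zero (h3 : tableCond m a b c 3)
    (h17 : tableCond m a b c 17) (h18 : tableCond m a b c 18) (h19 : tableCond m a b c 19) :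
    elemCoeff m a b c 0 (node 0 [node 0 [leaf 2]]) = 0 := by
  rw [elemCoeff_zero_node_singleton]
  simp (disch := assumption) only [elemCoeff_node0_leaf2_of_mem h3]
  simp only [tableCond, mul_assoc, ← mul_sum] at *
  ring_nf at *
  simp only [sum_add_distrib, sum_sub_distrib, ← sum_mul] at *
  linarith

theorem elemCoeff_zero_node0_node1_leaf1_eq_zero (h3 : tableCond m a b c 3)
    (h14 : tableCond m a b c 14) (h15 : tableCond m a b c 15) (h17 : tableCond m a b c 17)
    (h18 : tableCond m a b c 18) : elemCoeff m a b c 0 (node 0 [node 1 [leaf 1]]) = 0 := by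
  rw [elemCoeff_zero_node_singleton]
  simp (disch := assumption) only [elemCoeff_node1_leaf1_of_mem h3]
  simp only [tableCond, mul_assoc, ← mul_sum] at *
  ring_nf at *
  simp only [sum_add_distrib, sum_sub_distrib, ← sum_mul] at *
  linarith

theorem elemCoeff_zero_node0_node0_node0_leaf1_eq_zero (h3 : tableCond m a b c 3)
    (h19 : tableCond m a b c 19) (h20 : tableCond m a b c 20) :
    elemCoeff m a b c 0 (node 0 [node 0 [node 0 [leaf 1]]]) = 0 := by
  rw [elemCoeff_zero_node_singleton]
  simp (disch := assumption) only [elemCoeff_node0_node0_leaf1_of_mem h3]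
  simp only [tableCond, mul_assoc, ← mul_sum] at *
  ring_nf at *
  simp only [sum_sub_distrib, ← sum_mul] at *
  linarith

theorem elemCoeff_zero_node1_leaf2_eq_zero (h1 : tableCond m a b c 1) (h3 : tableCond m a b c 3)
    (h8 : tableCond m a b c 8) (h9 : tableCond m a b c 9) (h10 : tableCond m a b c 10)
    (h12 : tableCond m a b c 12) (h13 : tableCond m a b c 13) (h14 : tableCond m a b c 14) :
    elemCoeff m a b c 0 (node 1 [leaf 2]) = 0 := by
  rw [elemCoeff_zero_node_singleton, h1.2.1]
  simp (disch := assumption) only [elemCoeff_leaf2_of_mem h3]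
  simp only [tableCond, mul_assoc, ← mul_sum] at *
  ring_nf at *
  simp only [sum_add_distrib, sum_sub_distrib, sum_neg_distrib, ← sum_mul] at *
  linarith

theorem elemCoeff_zero_node1_node0_leaf1_eq_zero (h1 : tableCond m a b c 1)
    (h3 : tableCond m a b c 3) (h10 : tableCond m a b c 10) (h11 : tableCond m a b c 11)
    (h14 : tableCond m a b c 14) (h15 : tableCond m a b c 15) :
    elemCoeff m a b c 0 (node 1 [node 0 [leaf 1]]) = 0 := by
  rw [elemCoeff_zero_node_singleton, h1.2.1]
  simp (disch := assumption) only [elemCoeff_node0_leaf1_of_mem h3]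
  simp only [tableCond, mul_assoc, ← mul_sum] at *
  ring_nf at *
  simp only [sum_add_distrib, sum_sub_distrib, ← sum_mul] at *
  linarith

theorem elemCoeff_zero_node2_leaf1_eq_zero (h1 : tableCond m a b c 1) (h3 : tableCond m a b c 3)
    (h6 : tableCond m a b c 6) (h7 : tableCond m a b c 7) (h8 : tableCond m a b c 8)
    (h9 : tableCond m a b c 9) (h12 : tableCond m a b c 12) (h13 : tableCond m a b c 13) :
    elemCoeff m a b c 0 (node 2 [leaf 1]) = 0 := by
  rw [elemCoeff_zero_node_singleton, h1.2.1]
  simp (disch := assumption) only [elemCoeff_leaf1_of_mem h3]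
  simp only [tableCond, mul_assoc, ← mul_sum] at *
  ring_nf at *
  simp only [sum_add_distrib, sum_sub_distrib, ← sum_mul] at *
  linarith

theorem elemCoeff_zero_node0_leaf1_leaf1_eq_zero (h3 : tableCond m a b c 3)
    (h12 : tableCond m a b c 12) (h13 : tableCond m a b c 13) (h16 : tableCond m a b c 16) :
    elemCoeff m a b c 0 (node 0 [leaf 1, leaf 1]) = 0 := by
  rw [elemCoeff_zero_node_cons]
  simp (disch := assumption) only [List.map_cons, List.map_nil, List.prod_cons, List.prod_nil,
    mul_one, elemCoeff_leaf1_of_mem h3]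
  simp only [tableCond, mul_assoc, ← mul_sum] at *
  ring_nf at *
  simp only [sum_add_distrib, sum_neg_distrib, ← sum_mul] at *
  linarith

theorem elemCoeff_zero_eq_zero_of_order_le_five {t : LNTree} (hb : ¬ IsBranch (leaf 0) t)
    (ht : t.order ≤ 5)
    (hcond : ∀ n, 1 ≤ n → n ≤ numCond t.order → tableCond m a b c n) :
    elemCoeff m a b c 0 t = 0 := by
  -- `C n` is condition (n) of Table 1; the default arguments check the range of `n` once `t` is
  -- one of the explicit trees.
  have C (n : ℕ) (h1 : 1 ≤ n := by norm_num) (h2 : n ≤ numCond t.order := by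
      simp [order_node, numCond]) : tableCond m a b c n := hcond n h1 h2
  rcases eq_of_order_le_five hb ht with rfl | rfl | rfl | rfl | rfl | rfl | rfl | rfl | rfl |
    rfl | rfl | rfl | rfl | rfl | rfl | rfl | rfl
  · exact elemCoeff_leaf0_eq_zero (C 3) (C 4) 0 (Nat.zero_le m)
  · exact elemCoeff_zero_leaf1_eq_zero (C 1) (C 4) (C 5)
  · exact elemCoeff_zero_leaf2_eq_zero (C 1) (C 4) (C 5) (C 6)
  · exact elemCoeff_zero_leaf3_eq_zero (C 1) (C 4) (C 5) (C 6) (C 8)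
  · exact elemCoeff_zero_leaf4_eq_zero (C 1) (C 4) (C 5) (C 6) (C 8) (C 12)
  · exact elemCoeff_zero_node0_leaf1_eq_zero (C 3) (C 6) (C 7)
  · exact elemCoeff_zero_node0_leaf2_eq_zero (C 3) (C 8) (C 9) (C 10)
  · exact elemCoeff_zero_node1_leaf1_eq_zero (C 1) (C 3) (C 6) (C 7) (C 8) (C 9)
  · exact elemCoeff_zero_node0_node0_leaf1_eq_zero (C 3) (C 10) (C 11)
  · exact elemCoeff_zero_node0_leaf3_eq_zero (C 3) (C 12) (C 13) (C 14) (C 17)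
  · exact elemCoeff_zero_node0_node0_leaf2_eq_zero (C 3) (C 17) (C 18) (C 19)
  · exact elemCoeff_zero_node0_node1_leaf1_eq_zero (C 3) (C 14) (C 15) (C 17) (C 18)
  · exact elemCoeff_zero_node0_node0_node0_leaf1_eq_zero (C 3) (C 19) (C 20)
  · exact elemCoeff_zero_node1_leaf2_eq_zero (C 1) (C 3) (C 8) (C 9) (C 10) (C 12) (C 13) (C 14)
  · exact elemCoeff_zero_node1_node0_leaf1_eq_zero (C 1) (C 3) (C 10) (C 11) (C 14) (C 15)
  · exact elemCoeff_zero_node2_leaf1_eq_zero (C 1) (C 3) (C 6) (C 7) (C 8) (C 9) (C 12) (C 13)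
  · exact elemCoeff_zero_node0_leaf1_leaf1_eq_zero (C 3) (C 12) (C 13) (C 16)

end RootCoefficients

theorem numCond_mono {w r : ℕ} (hw : 1 ≤ w) (hwr : w ≤ r) (hr : r ≤ 5) :
    numCond w ≤ numCond r := by
  interval_cases r <;> interval_cases w <;> decide

theorem stmt_12_general (m : ℕ) (a : ℕ → ℕ → ℝ) (b c : ℕ → ℝ) :
    ∀ r : ℕ, 1 ≤ r → r ≤ 5 →
      (∀ n, 1 ≤ n → n ≤ numCond r → tableCond m a b c n) →
      ((∀ i ≤ m, elemCoeff m a b c i (LNTree.node 0 []) = 0) ∧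
        ∀ S ∈ ULNTrMinus r, ∀ t ∈ S, elemCoeff m a b c 0 t = 0) := by
  intro r hr1 hr5 hcond
  have h4 : 4 ≤ numCond r := by interval_cases r <;> decide
  refine ⟨elemCoeff_leaf0_eq_zero (hcond 3 (by norm_num) (by omega)) (hcond 4 (by norm_num) h4),
    ?_⟩
  rintro S ⟨⟨t, ht, rfl⟩, hb⟩ t' ht'
  rw [LNEquiv.elemCoeff_eq ht']
  exact elemCoeff_zero_eq_zero_of_order_le_five (fun h => hb ⟨_, _, rfl, rfl, h⟩) (ht.trans hr5)
    fun n h1 h2 => hcond n h1 (h2.trans (numCond_mono (one_le_order t) ht hr5))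

/-- For each `r ∈ {1,…,5}`: the `r`th-order conditions of Table 1 imply the simplified
order condition `C(r)`: `A_i^m([ ]_0) = 0` for every `i = 0,…,m`, and `A_0^m(Υ) = 0`
for every ULN-tree `Υ ∈ T_{r−}` (evaluated on any representative). -/
theorem stmt_12 (m : ℕ) (hm : 1 ≤ m) (a : ℕ → ℕ → ℝ) (b c : ℕ → ℝ) :
    ∀ r : ℕ, 1 ≤ r → r ≤ 5 →
      (∀ n, 1 ≤ n → n ≤ numCond r → tableCond m a b c n) →
      ((∀ i ≤ m, elemCoeff m a b c i (LNTree.node 0 []) = 0) ∧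
        ∀ S ∈ ULNTrMinus r, ∀ t ∈ S, elemCoeff m a b c 0 t = 0) :=
  stmt_12_general m a b c
end

section
/- Explicit order barrier: there exist no real coefficients a_{ij} (1 ≤ i,j ≤ 4), b_i (1 ≤ i ≤ 4), c_i (0 ≤ i ≤ 4) with m = 4 satisfying all of conditions (1)–(11) of Table 1; indeed, any m = 4 coefficients satisfying conditions (2)–(11) must have c₁ = 1, which contradicts condition (1). Consequently no 4th-order instance of the explicit Runge–Kutta scheme for BSDEs exists with m ≤ 4 stages. -/
open Finset

theorem sum_Icc_one_four {M : Type*} [AddCommMonoid M] (f : ℕ → M) :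
    ∑ i ∈ Icc 1 4, f i = f 1 + f 2 + f 3 + f 4 := by
  simp [sum_Icc_succ_top]

section Tableau

variable {m : ℕ} {a : ℕ → ℕ → ℝ} {b c : ℕ → ℝ}

theorem tableCond_last_node_eq_zero (hm : 1 ≤ m) (h2 : tableCond m a b c 2)
    (h3 : tableCond m a b c 3) : c m = 0 := by
  rw [h3 m hm le_rfl]
  exact sum_eq_zero fun j hj => h2 m j (mem_Icc.mp hj).1 (mem_Icc.mp hj).2 le_rfl

theorem not_tableCond_eleven_of_le_three (hm : m ≤ 3) (h2 : tableCond m a b c 2)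
    (hcm : c m = 0) : ¬ tableCond m a b c 11 := by
  suffices ∑ i ∈ Icc 1 m, ∑ j ∈ Icc 1 m, ∑ k ∈ Icc 1 m, b i * a i j * a j k * c k = 0 by
    simp [tableCond, this]
  refine sum_eq_zero fun i hi => sum_eq_zero fun j hj => sum_eq_zero fun k hk => ?_
  simp only [mem_Icc] at hi hj hk
  by_cases hji : j ≤ i
  · simp [h2 i j hj.1 hji hi.2]
  by_cases hkj : k ≤ j
  · simp [h2 j k hk.1 hkj hj.2]
  obtain rfl : k = m := by omega
  simp [hcm]

theorem tableCond_four_node_one_eq_one (h : ∀ n, 2 ≤ n → n ≤ 11 → tableCond 4 a b c n) :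
    c 1 = 1 := by
  have h2 : tableCond 4 a b c 2 := h 2 (by norm_num) (by norm_num)
  have hc4 : c 4 = 0 :=
    tableCond_last_node_eq_zero (by norm_num) h2 (h 3 (by norm_num) (by norm_num))
  have hz : ∀ i j, 1 ≤ j → j ≤ i → i ≤ 4 → a i j = 0 := h2
  have h5 := h 5 (by norm_num) (by norm_num)
  have h6 := h 6 (by norm_num) (by norm_num)
  have h7 := h 7 (by norm_num) (by norm_num)
  have h8 := h 8 (by norm_num) (by norm_num)
  have h9 := h 9 (by norm_num) (by norm_num)
  have h10 := h 10 (by norm_num) (by norm_num)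
  have h11 := h 11 (by norm_num) (by norm_num)
  simp only [tableCond, sum_Icc_one_four] at h5 h6 h7 h8 h9 h10 h11
  simp only [hz, hc4, le_refl, Nat.one_le_ofNat, Nat.reduceLeDiff, mul_zero, zero_mul,
    add_zero, zero_add] at h5 h6 h7 h8 h9 h10 h11
  have hS₁ :
      b 2 * c 2 * (c 2 - c 1) * (c 2 - c 3) = 1 / 4 - (c 1 + c 3) / 3 + c 1 * c 3 / 2 := by
    linear_combination h8 - (c 1 + c 3) * h6 + c 1 * c 3 * h5
  have hS₂ : b 2 * (c 2 - c 1) * (a 2 3 * c 3) = 1 / 8 - c 1 / 6 := by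
    linear_combination h9 - c 1 * h7
  have hS₃ : b 1 * a 1 2 * c 2 * (c 2 - c 3) = 1 / 12 - c 3 / 6 := by
    linear_combination h10 - c 3 * h7
  have hS₄ : b 1 * a 1 2 * (a 2 3 * c 3) = 1 / 24 := by
    linear_combination h11
  have hc3 : c 3 ≠ 0 := by
    intro h0
    norm_num [h0] at hS₄
  have hvalues : (1 / 4 - (c 1 + c 3) / 3 + c 1 * c 3 / 2) * (1 / 24) =
      (1 / 8 - c 1 / 6) * (1 / 12 - c 3 / 6) := by
    rw [← hS₁, ← hS₂, ← hS₃, ← hS₄]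
    ring
  have key : c 3 * (c 1 - 1) = 0 := by
    linear_combination -144 * hvalues
  linarith [(mul_eq_zero.mp key).resolve_left hc3]

end Tableau

/-- Explicit order barrier.  Any `m = 4` coefficients satisfying conditions (2)–(11) of
Table 1 must have `c₁ = 1`, contradicting condition (1); consequently, for every
`m ≤ 4`, there are no coefficients satisfying all of conditions (1)–(11), i.e. no
4th-order instance of the explicit Runge–Kutta scheme for BSDEs exists with `m ≤ 4`
stages. -/
theorem stmt_15 :
    (∀ (a : ℕ → ℕ → ℝ) (b c : ℕ → ℝ),
        (∀ n, 2 ≤ n → n ≤ 11 → tableCond 4 a b c n) → c 1 = 1) ∧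
    (∀ m : ℕ, 1 ≤ m → m ≤ 4 →
        ¬ ∃ (a : ℕ → ℕ → ℝ) (b c : ℕ → ℝ),
            ∀ n, 1 ≤ n → n ≤ 11 → tableCond m a b c n) := by
  refine ⟨fun a b c => tableCond_four_node_one_eq_one, ?_⟩
  rintro m hm1 hm4 ⟨a, b, c, h⟩
  obtain ⟨hcm, hc0, hdec⟩ : tableCond m a b c 1 := h 1 le_rfl (by norm_num)
  have h2 : tableCond m a b c 2 := h 2 (by norm_num) (by norm_num)
  obtain hm | rfl : m < 4 ∨ m = 4 := by omega
  · exact not_tableCond_eleven_of_le_three (by omega) h2 hcm (h 11 (by norm_num) le_rfl)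
  · have hc1 := tableCond_four_node_one_eq_one fun n hn => h n (by omega)
    have := hdec 1 le_rfl (by norm_num)
    simp [hc1, hc0] at this
end
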